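/- For 1 ≤ k ≤ d < n, P(n, d) ≤ P(n−k, d) · C(n, k), where C(n, k) is the binomial coefficient. -/

import Mathlib

/-!
Sort the permutations of a code by the set `T` of positions at which they take the `n - k`
smallest values; there are `C(n, n - k) = C(n, k)` such sets. Two permutations with the same `T`
place their `k` largest values on the same `k` positions, where they differ by at most `k - 1 < d`,
so their distance `≥ d` is attained inside `T`. Restricting to `T` therefore turns each class into
a code of permutations of `{1,…,n-k}` with minimum distance `d`, which has at most `P(n-k, d)`
elements.
-/

def permDist {n : ℕ} (σ τ : Equiv.Perm (Fin n)) : ℕ :=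
  Finset.univ.sup fun i => Nat.dist (σ i : ℕ) (τ i : ℕ)

noncomputable def P (n d : ℕ) : ℕ :=
  sSup {k | ∃ A : Finset (Equiv.Perm (Fin n)),
    (∀ σ ∈ A, ∀ τ ∈ A, σ ≠ τ → d ≤ permDist σ τ) ∧ A.card = k}

open Finset Equiv

section

variable {n m d : ℕ}

@[simp]
lemma permDist_self (σ : Perm (Fin n)) : permDist σ σ = 0 := by
  simp [permDist]

lemma card_le_P {A : Finset (Perm (Fin n))}
    (hA : ∀ σ ∈ A, ∀ τ ∈ A, σ ≠ τ → d ≤ permDist σ τ) : #A ≤ P n d :=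
  le_csSup ⟨Fintype.card (Perm (Fin n)), by rintro _ ⟨B, -, rfl⟩; exact card_le_univ B⟩
    ⟨A, hA, rfl⟩

lemma P_le_of_forall_card_le
    (h : ∀ A : Finset (Perm (Fin n)), (∀ σ ∈ A, ∀ τ ∈ A, σ ≠ τ → d ≤ permDist σ τ) → #A ≤ m) :
    P n d ≤ m :=
  csSup_le ⟨0, ∅, by simp⟩ fun _ ⟨A, hA, hcard⟩ => hcard ▸ h A hA

/-- `f` is injective because `permDist σ σ = 0 < d`, and its image is a code. -/
lemma card_le_P_of_le_permDist {α : Type*} {B : Finset α} (hd : 0 < d) (f : B → Perm (Fin m))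
    (hf : ∀ σ τ, σ ≠ τ → d ≤ permDist (f σ) (f τ)) : #B ≤ P m d := by
  have hinj : Function.Injective f := by
    intro σ τ hστ
    by_contra hne
    have := hf σ τ hne
    rw [hστ, permDist_self] at this
    omega
  rw [← card_attach, ← card_image_of_injective _ hinj]
  refine card_le_P fun σ' hσ' τ' hτ' hne => ?_
  obtain ⟨σ, -, rfl⟩ := mem_image.mp hσ'
  obtain ⟨τ, -, rfl⟩ := mem_image.mp hτ'
  exact hf σ τ fun h => hne (congrArg f h)

def lowSet (m : ℕ) (σ : Perm (Fin n)) : Finset (Fin n) :=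
  {i | (σ i : ℕ) < m}

lemma card_lowSet (hm : m ≤ n) (σ : Perm (Fin n)) : #(lowSet m σ) = m := by
  have : lowSet m σ = ({j : Fin n | (j : ℕ) < m} : Finset (Fin n)).map σ.symm.toEmbedding := by
    ext i
    simp [lowSet]
  rw [this, card_map, Fin.card_filter_val_lt, min_eq_right hm]

/-- The permutation of `Fin m` induced by `σ` on the positions `T` where it takes its values
below `m`, with `T` enumerated in increasing order. -/
noncomputable def restrictLow (σ : Perm (Fin n)) {T : Finset (Fin n)} (hT : #T = m)
    (hσ : lowSet m σ = T) : Perm (Fin m) :=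
  Equiv.ofBijective
    (fun x => ⟨σ (T.orderIsoOfFin hT x), by
      have hx : (T.orderIsoOfFin hT x : Fin n) ∈ lowSet m σ := hσ ▸ (T.orderIsoOfFin hT x).2
      simpa [lowSet] using hx⟩)
    (Finite.injective_iff_bijective.mp fun x y hxy =>
      (T.orderIsoOfFin hT).injective (Subtype.ext (σ.injective (Fin.ext (Fin.mk.inj hxy)))))

lemma restrictLow_apply (σ : Perm (Fin n)) {T : Finset (Fin n)} (hT : #T = m)
    (hσ : lowSet m σ = T) (x : Fin m) :
    (restrictLow σ hT hσ x : ℕ) = σ (T.orderIsoOfFin hT x) :=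
  rfl

lemma permDist_le_max_restrictLow {T : Finset (Fin n)} (hT : #T = m) {σ τ : Perm (Fin n)}
    (hσ : lowSet m σ = T) (hτ : lowSet m τ = T) :
    permDist σ τ ≤ max (permDist (restrictLow σ hT hσ) (restrictLow τ hT hτ)) (n - 1 - m) := by
  refine Finset.sup_le fun i _ => ?_
  by_cases hi : i ∈ T
  · obtain ⟨x, hx⟩ := (T.orderIsoOfFin hT).surjective ⟨i, hi⟩
    refine le_max_of_le_left ?_
    calc Nat.dist (σ i) (τ i)
        = Nat.dist (restrictLow σ hT hσ x : ℕ) (restrictLow τ hT hτ x : ℕ) := by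
          rw [restrictLow_apply, restrictLow_apply, hx]
      _ ≤ _ := le_sup (f := fun x => Nat.dist (restrictLow σ hT hσ x : ℕ)
          (restrictLow τ hT hτ x : ℕ)) (mem_univ x)
  · have hσi : m ≤ (σ i : ℕ) := by simpa [← hσ, lowSet] using hi
    have hτi : m ≤ (τ i : ℕ) := by simpa [← hτ, lowSet] using hi
    have := (σ i).isLt
    have := (τ i).isLt
    refine le_max_of_le_right ?_
    unfold Nat.dist
    omega

lemma card_le_P_of_lowSet_eq (hd : 0 < d) (hnmd : n ≤ m + d) {B : Finset (Perm (Fin n))}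
    (hB : ∀ σ ∈ B, ∀ τ ∈ B, σ ≠ τ → d ≤ permDist σ τ) {T : Finset (Fin n)} (hT : #T = m)
    (hBT : ∀ σ ∈ B, lowSet m σ = T) : #B ≤ P m d := by
  refine card_le_P_of_le_permDist hd (fun σ => restrictLow σ.1 hT (hBT σ.1 σ.2))
    fun σ τ hne => ?_
  have hdist := hB σ σ.2 τ τ.2 (Subtype.coe_ne_coe.mpr hne)
  have hmax := permDist_le_max_restrictLow hT (hBT σ σ.2) (hBT τ τ.2)
  omega

end

/-- For `1 ≤ k ≤ d < n`, `P(n, d) ≤ P(n−k, d) · C(n, k)`. -/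
theorem stmt12 (n d k : ℕ) (hk : 1 ≤ k) (hkd : k ≤ d) (hd : d < n) :
    P n d ≤ P (n - k) d * Nat.choose n k := by
  refine P_le_of_forall_card_le fun A hA => ?_
  calc #A = ∑ T ∈ powersetCard (n - k) univ, #{σ ∈ A | lowSet (n - k) σ = T} :=
        card_eq_sum_card_fiberwise fun σ _ =>
          mem_coe.mpr (mem_powersetCard_univ.mpr (card_lowSet (Nat.sub_le n k) σ))
    _ ≤ ∑ _T ∈ powersetCard (n - k) (univ : Finset (Fin n)), P (n - k) d := by
        refine sum_le_sum fun T hT => card_le_P_of_lowSet_eq (by omega) (by omega)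
          (fun σ hσ τ hτ => hA σ (mem_filter.mp hσ).1 τ (mem_filter.mp hτ).1)
          (mem_powersetCard_univ.mp hT) fun σ hσ => (mem_filter.mp hσ).2
    _ = P (n - k) d * Nat.choose n k := by
        rw [sum_const, card_powersetCard, card_univ, Fintype.card_fin,
          Nat.choose_symm (by omega), smul_eq_mul, mul_comm]
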